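/- arXiv:1101.3745 — 3 statements merged into one kernel-verified Lean document; each statement's English description precedes it below -/
import Mathlib

section
/- Let P be a vector space partition of an n-dimensional vector space V over the finite field F with q elements such that P has at least two members. Then |P| ≥ q^{⌈n/2⌉} + 1. -/
/-!
Counting nonzero vectors gives `∑_{U ∈ P} (q^{dim U} - 1) = q^n - 1`. Two members of `P` meet
trivially, so their dimensions add up to at most `n`. If some member `W` has dimension
`d ≥ ⌈n/2⌉`, every other member has dimension at most `n - d`, and the count forces
`|P| - 1 ≥ q^d`. Otherwise every member has dimension at most `⌈n/2⌉ - 1`, and the count forces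
`|P| > q^{n - ⌈n/2⌉ + 1} ≥ q^{⌈n/2⌉}`.
-/

attribute [local instance] Classical.propDecidable

/-- A vector space partition: a finite set of nonzero subspaces such that every
nonzero vector lies in exactly one member. -/
def IsVSPartition (F : Type*) {V : Type*} [Field F] [AddCommGroup V] [Module F V]
    (P : Finset (Submodule F V)) : Prop :=
  (∀ U ∈ P, U ≠ ⊥) ∧ ∀ v : V, v ≠ 0 → ∃! U : Submodule F V, U ∈ P ∧ v ∈ U

/-- The number `m_d` of members of `P` of dimension `d`. -/
noncomputable def dimCount (F : Type*) {V : Type*} [Field F] [AddCommGroup V] [Module F V]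
    (P : Finset (Submodule F V)) (d : ℕ) : ℕ :=
  (P.filter fun (U : Submodule F V) => Module.finrank F ↥U = d).card

open Module

namespace IsVSPartition

variable {F V : Type*} [Field F] [AddCommGroup V] [Module F V] {P : Finset (Submodule F V)}
  {U W : Submodule F V}

theorem eq_of_mem_of_mem (hP : IsVSPartition F P) (hU : U ∈ P) (hW : W ∈ P) {v : V}
    (hv : v ≠ 0) (hvU : v ∈ U) (hvW : v ∈ W) : U = W :=
  (hP.2 v hv).unique ⟨hU, hvU⟩ ⟨hW, hvW⟩

theorem disjoint (hP : IsVSPartition F P) (hU : U ∈ P) (hW : W ∈ P) (hUW : U ≠ W) :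
    Disjoint U W :=
  Submodule.disjoint_def.mpr fun _ hvU hvW =>
    by_contra fun hv => hUW (hP.eq_of_mem_of_mem hU hW hv hvU hvW)

theorem sum_card_sub_one [Finite V] (hP : IsVSPartition F P) :
    ∑ U ∈ P, (Nat.card U - 1) = Nat.card V - 1 := by
  have := Fintype.ofFinite V
  let nonzero : Submodule F V → Finset V := fun U => (U : Set V).toFinset.erase 0
  have hcover : Finset.univ.erase 0 = P.biUnion nonzero := by
    ext v
    simp only [Finset.mem_erase, Finset.mem_univ, and_true, Finset.mem_biUnion, nonzero,
      Set.mem_toFinset, SetLike.mem_coe]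
    refine ⟨fun hv => ?_, fun ⟨_, _, hv, _⟩ => hv⟩
    obtain ⟨U, ⟨hU, hvU⟩, -⟩ := hP.2 v hv
    exact ⟨U, hU, hv, hvU⟩
  have hdisj : (P : Set (Submodule F V)).PairwiseDisjoint nonzero := by
    intro U hU W hW hUW
    refine Finset.disjoint_left.mpr fun v hvU hvW => ?_
    simp only [nonzero, Finset.mem_erase, Set.mem_toFinset, SetLike.mem_coe] at hvU hvW
    exact hUW (hP.eq_of_mem_of_mem hU hW hvU.1 hvU.2 hvW.2)
  have hcard : ∀ U, (nonzero U).card = Nat.card U - 1 := fun U => by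
    rw [Finset.card_erase_of_mem (by simp), Set.toFinset_card, Nat.card_eq_fintype_card]
    rfl
  rw [Nat.card_eq_fintype_card (α := V), ← Finset.card_univ,
    ← Finset.card_erase_of_mem (Finset.mem_univ 0), hcover, Finset.card_biUnion hdisj]
  exact Finset.sum_congr rfl fun U _ => (hcard U).symm

variable [FiniteDimensional F V]

theorem sum_pow_finrank_sub_one [Finite F] (hP : IsVSPartition F P) :
    ∑ U ∈ P, (Nat.card F ^ finrank F U - 1) = Nat.card F ^ finrank F V - 1 := by
  have := Module.finite_of_finite F (M := V)
  simp only [← Module.natCard_eq_pow_finrank]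
  exact hP.sum_card_sub_one

theorem finrank_add_one_le (hP : IsVSPartition F P) (hcard : 2 ≤ P.card) (hW : W ∈ P) :
    finrank F W + 1 ≤ finrank F V := by
  obtain ⟨U, hU, hUW⟩ := P.exists_mem_ne hcard W
  have hUpos : 1 ≤ finrank F U := Submodule.one_le_finrank_iff.mpr (hP.1 U hU)
  have := Submodule.finrank_add_finrank_le_of_disjoint (hP.disjoint hW hU hUW.symm)
  omega

theorem pow_finrank_lt_card [Finite F] (hP : IsVSPartition F P) (hcard : 2 ≤ P.card)
    (hW : W ∈ P) : Nat.card F ^ finrank F W < P.card := by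
  have hsplit := Finset.add_sum_erase P (fun U => Nat.card F ^ finrank F U - 1) hW
  rw [hP.sum_pow_finrank_sub_one] at hsplit
  set q := Nat.card F
  set d := finrank F W
  set n := finrank F V
  have hq : 1 < q := Finite.one_lt_card
  have hdn : d + 1 ≤ n := hP.finrank_add_one_le hcard hW
  have hothers : ∀ U ∈ P.erase W, q ^ finrank F U - 1 ≤ q ^ (n - d) - 1 := fun U hU => by
    obtain ⟨hUW, hU⟩ := Finset.mem_erase.mp hU
    have := Submodule.finrank_add_finrank_le_of_disjoint (hP.disjoint hU hW hUW)
    exact Nat.sub_le_sub_right (Nat.pow_le_pow_right hq.le (by omega)) 1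
  have hqd : 1 ≤ q ^ d := Nat.one_le_pow _ _ (by omega)
  have hfactor : q ^ n - q ^ d = q ^ d * (q ^ (n - d) - 1) := by
    rw [Nat.mul_sub_one, ← pow_add, Nat.add_sub_cancel' (by omega)]
  have hle : q ^ d * (q ^ (n - d) - 1) ≤ (P.card - 1) * (q ^ (n - d) - 1) :=
    calc q ^ d * (q ^ (n - d) - 1) = ∑ U ∈ P.erase W, (q ^ finrank F U - 1) := by omega
      _ ≤ ∑ _U ∈ P.erase W, (q ^ (n - d) - 1) := Finset.sum_le_sum hothers
      _ = (P.card - 1) * (q ^ (n - d) - 1) := by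
        rw [Finset.sum_const, Finset.card_erase_of_mem hW, smul_eq_mul]
  have hpos : 0 < q ^ (n - d) - 1 := Nat.sub_pos_of_lt (Nat.one_lt_pow (by omega) hq)
  have := Nat.le_of_mul_le_mul_right hle hpos
  omega

theorem pow_finrank_lt_card_mul_pow [Finite F] (hP : IsVSPartition F P) (hcard : 2 ≤ P.card)
    {k : ℕ} (hk : ∀ U ∈ P, finrank F U ≤ k) :
    Nat.card F ^ finrank F V < P.card * Nat.card F ^ k := by
  set q := Nat.card F
  have hq : 1 < q := Finite.one_lt_card
  have hle : q ^ finrank F V - 1 ≤ P.card * (q ^ k - 1) :=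
    calc q ^ finrank F V - 1 = ∑ U ∈ P, (q ^ finrank F U - 1) := hP.sum_pow_finrank_sub_one.symm
      _ ≤ ∑ _U ∈ P, (q ^ k - 1) :=
        Finset.sum_le_sum fun U hU => Nat.sub_le_sub_right (Nat.pow_le_pow_right hq.le (hk U hU)) 1
      _ = P.card * (q ^ k - 1) := by rw [Finset.sum_const, smul_eq_mul]
  rw [Nat.mul_sub_one] at hle
  have : 1 ≤ q ^ finrank F V := Nat.one_le_pow _ _ (by omega)
  have : P.card ≤ P.card * q ^ k := Nat.le_mul_of_pos_right _ (Nat.pow_pos (by omega))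
  omega

end IsVSPartition

/-- Any vector space partition with at least two members has at least
`q^⌈n/2⌉ + 1` members. -/
theorem stmt9 (q n : ℕ) (F V : Type*) [Field F] [Fintype F] [AddCommGroup V]
    [Module F V] [FiniteDimensional F V] (hq : Fintype.card F = q)
    (hnV : Module.finrank F V = n)
    (P : Finset (Submodule F V)) (hP : IsVSPartition F P)
    (hcard : 2 ≤ P.card) :
    q ^ ((n + 1) / 2) + 1 ≤ P.card := by
  rw [← hq, ← Nat.card_eq_fintype_card]
  have hq1 : 1 < Nat.card F := Finite.one_lt_card
  obtain ⟨W, hW, hWmax⟩ := P.exists_max_image (fun U => finrank F U) (Finset.card_pos.mp (by omega))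
  by_cases hlarge : (n + 1) / 2 ≤ finrank F W
  · exact (Nat.pow_le_pow_right hq1.le hlarge).trans_lt (hP.pow_finrank_lt_card hcard hW)
  · have hlt := hP.pow_finrank_lt_card_mul_pow hcard (k := (n + 1) / 2 - 1)
      fun U hU => by have := hWmax U hU; omega
    by_contra! hsmall
    have hmul := Nat.mul_le_mul_right (Nat.card F ^ ((n + 1) / 2 - 1)) (Nat.le_of_lt_succ hsmall)
    rw [← pow_add] at hmul
    have := Nat.pow_le_pow_right hq1.le (show (n + 1) / 2 + ((n + 1) / 2 - 1) ≤ n by omega)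
    rw [hnV] at hlt
    omega
end

section
/- Let P be a vector space partition of a 2t-dimensional vector space V over the finite field F with q elements, let a be the integer with m_t = q^t + 1 − a, and let d be an integer with t/2 < d < t such that m_d ≤ q^{⌈d/2⌉} + 1. If a < m_d, then there exists a maximal partial t-spread S in V whose deficiency δ = q^t + 1 − |S| satisfies 0 < δ ≤ a. -/
/-!
The `t`-dimensional members of `P` form a partial spread of size `q^t + 1 - a`; extend it to a
maximal partial spread `T`, whose deficiency is then at most `a`. If the deficiency were `0`, `T`
would be a spread, and every `d`-dimensional member `U` of `P` would be cut by the members of `T`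
into a vector space partition of `U`. Only the `a` members of `T` outside `P` can meet `U`, and a
partition of a `d`-dimensional space into proper subspaces has at least `q^⌈d/2⌉ + 1 > a` parts,
so `U` lies inside a single member of `T`. As `2d > t`, no member of `T` contains two of them,
whence `m_d ≤ a`, a contradiction.
-/

attribute [local instance] Classical.propDecidable

/-- A partial `t`-spread: a set of `t`-dimensional subspaces, any two distinct members
of which intersect in the zero subspace. -/
def IsPartialSpread (F : Type*) {V : Type*} [Field F] [AddCommGroup V] [Module F V]
    (t : ℕ) (S : Finset (Submodule F V)) : Prop :=
  (∀ U ∈ S, Module.finrank F ↥U = t) ∧ ∀ U ∈ S, ∀ U' ∈ S, U ≠ U' → U ⊓ U' = ⊥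

/-- A `t`-spread: a partial `t`-spread that is also a vector space partition. -/
def IsSpread (F : Type*) {V : Type*} [Field F] [AddCommGroup V] [Module F V]
    (t : ℕ) (S : Finset (Submodule F V)) : Prop :=
  IsPartialSpread F t S ∧ IsVSPartition F S

/-- A maximal partial `t`-spread: a partial `t`-spread such that every `t`-dimensional
subspace meets some member nontrivially. -/
def IsMaximalPartialSpread (F : Type*) {V : Type*} [Field F] [AddCommGroup V] [Module F V]
    (t : ℕ) (S : Finset (Submodule F V)) : Prop :=
  IsPartialSpread F t S ∧
    ∀ W : Submodule F V, Module.finrank F ↥W = t → ∃ U ∈ S, W ⊓ U ≠ ⊥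

open Finset Module

section

variable {F V : Type*} [Field F] [AddCommGroup V] [Module F V]

lemma Submodule.finrank_add_finrank_le_of_disjoint_of_le [FiniteDimensional F V]
    {A B U : Submodule F V} (hAB : Disjoint A B) (hA : A ≤ U) (hB : B ≤ U) :
    finrank F A + finrank F B ≤ finrank F U := by
  have := Submodule.finrank_sup_add_finrank_inf_eq A B
  rw [hAB.eq_bot, finrank_bot, add_zero] at this
  exact this ▸ Submodule.finrank_mono (sup_le hA hB)

section Counting

variable [Fintype V]

noncomputable def nonzeroVectors (A : Submodule F V) : Finset V := {v | v ∈ A ∧ v ≠ 0}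

@[simp]
lemma mem_nonzeroVectors {A : Submodule F V} {v : V} : v ∈ nonzeroVectors A ↔ v ∈ A ∧ v ≠ 0 := by
  simp [nonzeroVectors]

variable {s : Finset (Submodule F V)} {U : Submodule F V}

lemma biUnion_nonzeroVectors_subset (hle : ∀ A ∈ s, A ≤ U) :
    s.biUnion nonzeroVectors ⊆ nonzeroVectors U := by
  intro v hv
  obtain ⟨A, hA, hvA⟩ := mem_biUnion.1 hv
  rw [mem_nonzeroVectors] at hvA ⊢
  exact ⟨hle A hA hvA.1, hvA.2⟩

variable [Fintype F]

lemma card_nonzeroVectors (A : Submodule F V) :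
    (#(nonzeroVectors A) : ℤ) = (Fintype.card F : ℤ) ^ finrank F A - 1 := by
  have hA : nonzeroVectors A = ({v | v ∈ A} : Finset V).erase 0 := by
    ext v; simp [and_comm]
  have hcard : #({v | v ∈ A} : Finset V) = Fintype.card F ^ finrank F A := by
    rw [← card_eq_pow_finrank (V := A), ← Fintype.card_subtype]
  rw [hA, card_erase_of_mem (by simp), hcard,
    Nat.cast_sub (Nat.one_le_pow _ _ Fintype.card_pos), Nat.cast_pow, Nat.cast_one]

lemma sum_pow_finrank_sub_one_eq_card_biUnion
    (hs : (s : Set (Submodule F V)).PairwiseDisjoint id) :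
    ∑ A ∈ s, ((Fintype.card F : ℤ) ^ finrank F A - 1) = #(s.biUnion nonzeroVectors) := by
  rw [card_biUnion, Nat.cast_sum]
  · exact sum_congr rfl fun A _ => (card_nonzeroVectors A).symm
  · intro A hA B hB hAB
    rw [Function.onFun, disjoint_left]
    intro v hvA hvB
    rw [mem_nonzeroVectors] at hvA hvB
    exact hvA.2 ((Submodule.disjoint_def.1 (hs hA hB hAB)) v hvA.1 hvB.1)

lemma sum_pow_finrank_sub_one_le (hs : (s : Set (Submodule F V)).PairwiseDisjoint id)
    (hle : ∀ A ∈ s, A ≤ U) :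
    ∑ A ∈ s, ((Fintype.card F : ℤ) ^ finrank F A - 1) ≤
      (Fintype.card F : ℤ) ^ finrank F U - 1 := by
  rw [sum_pow_finrank_sub_one_eq_card_biUnion hs, ← card_nonzeroVectors]
  exact_mod_cast card_le_card (biUnion_nonzeroVectors_subset hle)

lemma sum_pow_finrank_sub_one_eq (hs : (s : Set (Submodule F V)).PairwiseDisjoint id)
    (hle : ∀ A ∈ s, A ≤ U) (hcov : ∀ u ∈ U, u ≠ 0 → ∃ A ∈ s, u ∈ A) :
    ∑ A ∈ s, ((Fintype.card F : ℤ) ^ finrank F A - 1) =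
      (Fintype.card F : ℤ) ^ finrank F U - 1 := by
  rw [sum_pow_finrank_sub_one_eq_card_biUnion hs, ← card_nonzeroVectors]
  congr 2
  refine (biUnion_nonzeroVectors_subset hle).antisymm fun v hv => ?_
  rw [mem_nonzeroVectors] at hv
  obtain ⟨A, hA, hvA⟩ := hcov v hv.1 hv.2
  exact mem_biUnion.2 ⟨A, hA, mem_nonzeroVectors.2 ⟨hvA, hv.2⟩⟩

lemma exists_mem_of_sum_pow_finrank_sub_one_eq
    (hs : (s : Set (Submodule F V)).PairwiseDisjoint id) (hle : ∀ A ∈ s, A ≤ U)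
    (hsum : ∑ A ∈ s, ((Fintype.card F : ℤ) ^ finrank F A - 1) =
      (Fintype.card F : ℤ) ^ finrank F U - 1)
    {u : V} (hu : u ∈ U) (hu0 : u ≠ 0) : ∃ A ∈ s, u ∈ A := by
  rw [sum_pow_finrank_sub_one_eq_card_biUnion hs, ← card_nonzeroVectors, Nat.cast_inj] at hsum
  have hcover := eq_of_subset_of_card_le (biUnion_nonzeroVectors_subset hle) hsum.ge
  have hu' : u ∈ s.biUnion nonzeroVectors := hcover ▸ mem_nonzeroVectors.2 ⟨hu, hu0⟩
  obtain ⟨A, hA, hvA⟩ := mem_biUnion.1 hu'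
  exact ⟨A, hA, (mem_nonzeroVectors.1 hvA).1⟩

theorem pow_add_one_le_card_of_partition (hU : U ≠ ⊥)
    (hs : (s : Set (Submodule F V)).PairwiseDisjoint id) (hlt : ∀ A ∈ s, A < U)
    (hcov : ∀ u ∈ U, u ≠ 0 → ∃ A ∈ s, u ∈ A) :
    (Fintype.card F : ℤ) ^ ((finrank F U + 1) / 2) + 1 ≤ #s := by
  have hle : ∀ A ∈ s, A ≤ U := fun A hA => (hlt A hA).le
  have hsum := sum_pow_finrank_sub_one_eq hs hle hcov
  set q : ℤ := (Fintype.card F : ℤ)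
  set n := finrank F U
  have hq : 1 < q := Nat.one_lt_cast.2 Fintype.one_lt_card
  obtain ⟨u, hu, hu0⟩ := Submodule.ne_bot_iff U |>.1 hU
  obtain ⟨A₀, hA₀, -⟩ := hcov u hu hu0
  obtain ⟨A, hA, hAmax⟩ := s.exists_max_image (fun B => finrank F B) ⟨A₀, hA₀⟩
  set e := finrank F A
  have hen : e < n := Submodule.finrank_lt_finrank_of_lt (hlt A hA)
  have hpow : q ^ (n - e) * q ^ e = q ^ n := by rw [← pow_add, Nat.sub_add_cancel hen.le]
  have hqne : 1 < q ^ (n - e) := one_lt_pow₀ hq (by omega)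
  rcases le_or_gt n (2 * e) with hbig | hsmall
  · -- the other members fit beside `A`, so have dimension at most `n - e`
    have hrest : ∑ B ∈ s.erase A, (q ^ finrank F B - 1) ≤ #(s.erase A) • (q ^ (n - e) - 1) := by
      refine sum_le_card_nsmul _ _ _ fun B hB => ?_
      have hAB : Disjoint A B := hs hA (mem_of_mem_erase hB) (ne_of_mem_erase hB).symm
      have := Submodule.finrank_add_finrank_le_of_disjoint_of_le hAB (hle A hA)
        (hle B (mem_of_mem_erase hB))
      have := pow_le_pow_right₀ hq.le (show finrank F B ≤ n - e by omega)
      linarith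
    rw [← add_sum_erase s _ hA] at hsum
    rw [card_erase_of_mem hA, nsmul_eq_mul, Nat.cast_pred (card_pos.2 ⟨A, hA⟩)] at hrest
    have hqe : q ^ e ≤ #s - 1 := by nlinarith
    have := pow_le_pow_right₀ hq.le (show (n + 1) / 2 ≤ e by omega)
    linarith
  · -- all members have dimension at most `e < n / 2`
    have hall : ∑ B ∈ s, (q ^ finrank F B - 1) ≤ #s • (q ^ e - 1) := by
      refine sum_le_card_nsmul _ _ _ fun B hB => ?_
      have := pow_le_pow_right₀ hq.le (hAmax B hB)
      linarith
    rw [hsum, nsmul_eq_mul] at hall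
    have hqe : 1 ≤ q ^ e := one_le_pow₀ hq.le
    have hqs : q ^ (n - e) + 1 ≤ #s := by nlinarith
    have := pow_le_pow_right₀ hq.le (show (n + 1) / 2 ≤ n - e by omega)
    linarith

end Counting

section Spreads

variable {t : ℕ} {P S T : Finset (Submodule F V)}

lemma IsVSPartition.disjoint_s11 (hP : IsVSPartition F P) {U U' : Submodule F V} (hU : U ∈ P)
    (hU' : U' ∈ P) (hne : U ≠ U') : Disjoint U U' := by
  refine Submodule.disjoint_def.2 fun v hv hv' => ?_
  by_contra hv0
  obtain ⟨W, -, huniq⟩ := hP.2 v hv0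
  exact hne ((huniq U ⟨hU, hv⟩).trans (huniq U' ⟨hU', hv'⟩).symm)

lemma IsVSPartition.isPartialSpread_filter (hP : IsVSPartition F P) (t : ℕ) :
    IsPartialSpread F t {U ∈ P | finrank F U = t} :=
  ⟨fun _ hU => (mem_filter.1 hU).2, fun _ hU _ hU' hne =>
    (hP.disjoint_s11 (mem_filter.1 hU).1 (mem_filter.1 hU').1 hne).eq_bot⟩

lemma IsPartialSpread.pairwiseDisjoint (hS : IsPartialSpread F t S) :
    (S : Set (Submodule F V)).PairwiseDisjoint id :=
  fun _ hU _ hU' hne => disjoint_iff.2 (hS.2 _ hU _ hU' hne)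

lemma IsPartialSpread.insert (hS : IsPartialSpread F t S) {W : Submodule F V}
    (hW : finrank F W = t) (hmeet : ∀ U ∈ S, W ⊓ U = ⊥) : IsPartialSpread F t (insert W S) := by
  refine ⟨fun U hU => ?_, fun U hU U' hU' hne => ?_⟩
  · rcases mem_insert.1 hU with rfl | hU
    exacts [hW, hS.1 U hU]
  · rcases mem_insert.1 hU with rfl | hUS <;> rcases mem_insert.1 hU' with rfl | hU'S
    · exact absurd rfl hne
    · exact hmeet U' hU'S
    · rw [inf_comm]; exact hmeet U hUS
    · exact hS.2 U hUS U' hU'S hne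

lemma IsPartialSpread.exists_isMaximalPartialSpread_superset [Finite V]
    (hS : IsPartialSpread F t S) (ht : 0 < t) :
    ∃ T, S ⊆ T ∧ IsMaximalPartialSpread F t T := by
  have : Finite (Submodule F V) := Finite.of_injective _ SetLike.coe_injective
  obtain ⟨T, hST, hT⟩ := (Set.toFinite {T | IsPartialSpread F t T}).exists_le_maximal hS
  refine ⟨T, hST, hT.prop, fun W hW => ?_⟩
  by_contra! hmeet
  have hWT : W ∈ T :=
    hT.eq_of_ge (hT.prop.insert hW hmeet) (subset_insert W T) ▸ mem_insert_self W T
  have hW0 := hmeet W hWT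
  rw [inf_idem] at hW0
  rw [hW0, finrank_bot] at hW
  omega

variable [Fintype F]

lemma IsPartialSpread.card_le [Fintype V] (hS : IsPartialSpread F t S)
    (hV : finrank F V = 2 * t) (ht : 0 < t) :
    (#S : ℤ) ≤ (Fintype.card F : ℤ) ^ t + 1 := by
  have hsum := sum_pow_finrank_sub_one_le (U := ⊤) hS.pairwiseDisjoint fun _ _ => le_top
  rw [sum_congr rfl fun U hU => by rw [hS.1 U hU], sum_const, nsmul_eq_mul, finrank_top, hV,
    pow_mul'] at hsum
  have : 1 < (Fintype.card F : ℤ) ^ t := one_lt_pow₀ (Nat.one_lt_cast.2 Fintype.one_lt_card) ht.ne'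
  nlinarith

lemma IsPartialSpread.isSpread_of_card_eq [Fintype V] (hS : IsPartialSpread F t S)
    (hV : finrank F V = 2 * t) (ht : 0 < t) (hcard : (#S : ℤ) = (Fintype.card F : ℤ) ^ t + 1) :
    IsSpread F t S := by
  have hsum : ∑ U ∈ S, ((Fintype.card F : ℤ) ^ finrank F U - 1) =
      (Fintype.card F : ℤ) ^ finrank F (⊤ : Submodule F V) - 1 := by
    rw [sum_congr rfl fun U hU => by rw [hS.1 U hU], sum_const, nsmul_eq_mul, hcard, finrank_top,
      hV, pow_mul']
    ring
  refine ⟨hS, fun U hU => ?_, fun v hv => ?_⟩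
  · rintro rfl
    have := hS.1 ⊥ hU
    rw [finrank_bot] at this
    omega
  · obtain ⟨U, hU, hvU⟩ := exists_mem_of_sum_pow_finrank_sub_one_eq hS.pairwiseDisjoint
      (fun _ _ => le_top) hsum Submodule.mem_top hv
    refine ⟨U, ⟨hU, hvU⟩, fun U' ⟨hU', hvU'⟩ => ?_⟩
    by_contra hne
    exact hv (Submodule.disjoint_def.1 (hS.pairwiseDisjoint hU' hU hne) v hvU' hvU)

lemma IsVSPartition.exists_le_of_card_lt [Fintype V] (hT : IsVSPartition F T)
    {U : Submodule F V} (hU : U ≠ ⊥)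
    (hcard : (#{W ∈ T | U ⊓ W ≠ ⊥} : ℤ) < (Fintype.card F : ℤ) ^ ((finrank F U + 1) / 2) + 1) :
    ∃ W ∈ T, U ≤ W := by
  by_contra! hnot
  refine hcard.not_ge ((pow_add_one_le_card_of_partition hU
    (s := {W ∈ T | U ⊓ W ≠ ⊥}.image (U ⊓ ·)) ?_ ?_ ?_).trans (by exact_mod_cast card_image_le))
  · intro _ hA _ hB hAB
    obtain ⟨W, hW, rfl⟩ := mem_image.1 hA
    obtain ⟨W', hW', rfl⟩ := mem_image.1 hB
    exact (hT.disjoint_s11 (mem_filter.1 hW).1 (mem_filter.1 hW').1 (by rintro rfl; exact hAB rfl)).mono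
      inf_le_right inf_le_right
  · intro A hA
    obtain ⟨W, hW, rfl⟩ := mem_image.1 hA
    exact inf_le_left.lt_of_ne fun h => hnot W (mem_filter.1 hW).1 (inf_eq_left.1 h)
  · intro u hu hu0
    obtain ⟨W, ⟨hWT, huW⟩, -⟩ := hT.2 u hu0
    refine ⟨U ⊓ W, mem_image_of_mem _ (mem_filter.2 ⟨hWT, ?_⟩), hu, huW⟩
    exact (Submodule.ne_bot_iff _).2 ⟨u, ⟨hu, huW⟩, hu0⟩

end Spreads

theorem dimCount_le_card_sdiff_of_isSpread [Fintype F] [Fintype V] {P T : Finset (Submodule F V)}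
    {t d : ℕ} (hP : IsVSPartition F P) (hT : IsSpread F t T) (hd1 : t < 2 * d) (hd2 : d < t)
    (hsmall : (#(T \ {U ∈ P | finrank F U = t}) : ℤ) < (Fintype.card F : ℤ) ^ ((d + 1) / 2) + 1) :
    dimCount F P d ≤ #(T \ {U ∈ P | finrank F U = t}) := by
  refine card_le_card_of_forall_subsingleton (· ≤ ·) (fun U hU => ?_) fun W hW => ?_
  · obtain ⟨hUP, hUd⟩ := mem_filter.1 hU
    have hmeet : {W ∈ T | U ⊓ W ≠ ⊥} ⊆ T \ {U ∈ P | finrank F U = t} := by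
      intro W hW
      obtain ⟨hWT, hUW⟩ := mem_filter.1 hW
      refine mem_sdiff.2 ⟨hWT, fun hWS => hUW ?_⟩
      obtain ⟨hWP, hWt⟩ := mem_filter.1 hWS
      exact (hP.disjoint_s11 hUP hWP (by rintro rfl; omega)).eq_bot
    obtain ⟨W, hWT, hUW⟩ := hT.2.exists_le_of_card_lt (hP.1 U hUP) <| hUd ▸
      (Nat.cast_le.2 (card_le_card hmeet)).trans_lt hsmall
    refine ⟨W, hmeet (mem_filter.2 ⟨hWT, ?_⟩), hUW⟩
    rw [inf_eq_left.2 hUW]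
    exact hP.1 U hUP
  · -- two disjoint `d`-dimensional subspaces do not fit in a `t`-dimensional one, as `t < 2d`
    rintro U ⟨hU, hUW⟩ U' ⟨hU', hU'W⟩
    by_contra hne
    have := Submodule.finrank_add_finrank_le_of_disjoint_of_le
      (hP.disjoint_s11 (mem_filter.1 hU).1 (mem_filter.1 hU').1 hne) hUW hU'W
    rw [(mem_filter.1 hU).2, (mem_filter.1 hU').2, hT.1.1 W (mem_sdiff.1 hW).1] at this
    omega

end

/-- If `a < m_d ≤ q^⌈d/2⌉ + 1` for some `t/2 < d < t`, then there is a maximal partial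
`t`-spread with deficiency `δ` satisfying `0 < δ ≤ a`. -/
theorem stmt11 (q t d : ℕ) (F V : Type*) [Field F] [Fintype F] [AddCommGroup V]
    [Module F V] [FiniteDimensional F V] (hq : Fintype.card F = q)
    (hV : Module.finrank F V = 2 * t)
    (P : Finset (Submodule F V)) (hP : IsVSPartition F P)
    (a : ℤ) (ha : (dimCount F P t : ℤ) = (q : ℤ) ^ t + 1 - a)
    (hd1 : t < 2 * d) (hd2 : d < t)
    (hmd : dimCount F P d ≤ q ^ ((d + 1) / 2) + 1)
    (halt : a < (dimCount F P d : ℤ)) :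
    ∃ S : Finset (Submodule F V), IsMaximalPartialSpread F t S ∧
      0 < (q : ℤ) ^ t + 1 - (S.card : ℤ) ∧ (q : ℤ) ^ t + 1 - (S.card : ℤ) ≤ a := by
  subst hq
  have := Module.finite_of_finite F (M := V)
  have := Fintype.ofFinite V
  obtain ⟨T, hS₀T, hT⟩ :=
    (hP.isPartialSpread_filter t).exists_isMaximalPartialSpread_superset (by omega)
  have hS₀ : (dimCount F P t : ℤ) ≤ #T := Nat.cast_le.2 (card_le_card hS₀T)
  refine ⟨T, hT, ?_, by linarith⟩
  by_contra! hfull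
  have hTcard := le_antisymm (hT.1.card_le hV (by omega)) (by linarith)
  have hrest : (#(T \ {U ∈ P | finrank F U = t}) : ℤ) = a := by
    rw [card_sdiff_of_subset hS₀T, Nat.cast_sub (card_le_card hS₀T)]
    change (#T : ℤ) - dimCount F P t = a
    linarith
  have := dimCount_le_card_sdiff_of_isSpread hP (hT.1.isSpread_of_card_eq hV (by omega) hTcard)
    hd1 hd2 (hrest ▸ halt.trans_le (by exact_mod_cast hmd))
  linarith [(Nat.cast_le (α := ℤ)).2 this]
end

section
/- Let P be a vector space partition of a 2t-dimensional vector space V over the finite field F with q elements, let a be the integer with m_t = q^t + 1 − a, let d be an integer with t/2 < d < t, and let m be the number of members of P whose dimension e satisfies d ≤ e < t. If m < (q^t − 1)/(q^{t−d} − 1), then a ≥ m − R_q(t, d, m), as an inequality of rational numbers. -/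
attribute [local instance] Classical.propDecidable

/-- The rational number `R_q(t, d, m)`. -/
def Rq (q t d m : ℕ) : ℚ :=
  (m : ℚ) * ((m : ℚ) - 1) *
      (((q : ℚ) ^ (2 * t - 2 * d) - 1) / 2 + 1 - (q : ℚ) ^ (t - d)) /
    ((q : ℚ) ^ t - 1 - (m : ℚ) * ((q : ℚ) ^ (t - d) - 1))

open Finset Module

/-!
Count nonzero linear functionals on `V`. Two distinct `t`-dimensional members span `V`, so
the functionals vanishing on some `t`-dimensional member number exactly `m_t (q^t - 1)`, and
the set `S` of the remaining ones has `a (q^t - 1)` elements. A member `W` of dimension `e`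
with `d ≤ e < t` is annihilated by at least `q^(2t-e) - 1 - m_t (q^(t-e) - 1)` functionals
of `S`, and two distinct such members `W, W'` by at most `q^(2t-e-e') - 1`, because
`W ⊓ W' = ⊥`. The second Bonferroni inequality inside `S` gives
`2 (m - a) (q^t - 1 - B) ≤ m (m - 1) (q^(t-d) - 1)^2` with `B = ∑_W (q^(t-e) - 1)`,
and `B ≤ m (q^(t-d) - 1)` turns this into `a ≥ m - R_q(t, d, m)`.
-/

theorem Finset.two_mul_sum_card_le_card_biUnion_add_sum_card_inter {ι α : Type*}
    [DecidableEq ι] [DecidableEq α] (s : Finset ι) (f : ι → Finset α) :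
    2 * ∑ i ∈ s, #(f i) ≤
      2 * #(s.biUnion f) + ∑ i ∈ s, ∑ j ∈ s.erase i, #(f i ∩ f j) := by
  induction s using Finset.induction_on with
  | empty => simp
  | @insert a s ha ih =>
    have hpairs : ∑ i ∈ insert a s, ∑ j ∈ (insert a s).erase i, #(f i ∩ f j) =
        2 * ∑ j ∈ s, #(f a ∩ f j) + ∑ i ∈ s, ∑ j ∈ s.erase i, #(f i ∩ f j) := by
      have hrow : ∀ i ∈ s, ∑ j ∈ (insert a s).erase i, #(f i ∩ f j) =
          #(f a ∩ f i) + ∑ j ∈ s.erase i, #(f i ∩ f j) := fun i hi => by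
        have hia : i ≠ a := fun h => ha (h ▸ hi)
        rw [erase_insert_of_ne hia.symm, sum_insert (fun h => ha (mem_of_mem_erase h)),
          inter_comm]
      rw [sum_insert ha, erase_insert ha, sum_congr rfl hrow, sum_add_distrib]
      ring
    have hunion := card_union_add_card_inter (f a) (s.biUnion f)
    have hinter : #(f a ∩ s.biUnion f) ≤ ∑ j ∈ s, #(f a ∩ f j) := by
      rw [inter_biUnion]
      exact card_biUnion_le
    rw [sum_insert ha, biUnion_insert, hpairs]
    omega

theorem Finset.sum_sum_erase_add_add {ι R : Type*} [DecidableEq ι] [CommRing R]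
    (s : Finset ι) (c : R) (y : ι → R) :
    ∑ i ∈ s, ∑ j ∈ s.erase i, (c + y i + y j) =
      #s * (#s - 1) * c + 2 * (#s - 1) * ∑ i ∈ s, y i := by
  have hrow : ∀ i ∈ s, ∑ j ∈ s.erase i, (c + y i + y j) =
      (#s - 1) * (c + y i) + (∑ j ∈ s, y j - y i) := fun i hi => by
    rw [sum_add_distrib, sum_const, nsmul_eq_mul, cast_card_erase_of_mem hi,
      sum_erase_eq_sub hi]
  rw [sum_congr rfl hrow, sum_add_distrib, sum_sub_distrib, ← mul_sum, sum_add_distrib,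
    sum_const, sum_const, nsmul_eq_mul, nsmul_eq_mul]
  ring

lemma sum_sum_erase_pow_sub_le {ι K : Type*} [DecidableEq ι] [Field K] [LinearOrder K]
    [IsStrictOrderedRing K] {q : K} (hq : 1 ≤ q) {s : Finset ι} {e : ι → ℕ} {d t : ℕ}
    (he : ∀ i ∈ s, d ≤ e i ∧ e i < t) :
    ∑ i ∈ s, ∑ j ∈ s.erase i, (q ^ (2 * t - e i - e j) - 1) ≤
      #s * (#s - 1) * (q ^ (t - d) - 1) ^ 2 + 2 * (#s - 1) * ∑ i ∈ s, (q ^ (t - e i) - 1) := by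
  have hY (i : ι) (hi : i ∈ s) :
      0 ≤ q ^ (t - e i) - 1 ∧ q ^ (t - e i) - 1 ≤ q ^ (t - d) - 1 :=
    ⟨sub_nonneg.2 (one_le_pow₀ hq),
      sub_le_sub_right (pow_le_pow_right₀ hq (Nat.sub_le_sub_left (he i hi).1 t)) 1⟩
  rw [← sum_sum_erase_add_add]
  gcongr with i hi j hj
  have hj' := mem_of_mem_erase hj
  have hexp : 2 * t - e i - e j = (t - e i) + (t - e j) := by
    have := (he i hi).2
    have := (he j hj').2
    omega
  obtain ⟨hYi0, hYi⟩ := hY i hi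
  obtain ⟨hYj0, hYj⟩ := hY j hj'
  rw [hexp, pow_add]
  nlinarith [mul_le_mul hYi hYj hYj0 (hYi0.trans hYi)]

section NonzeroAnnihilator

variable {F V : Type*} [Field F] [AddCommGroup V] [Module F V] [Fintype (Dual F V)]

noncomputable def nonzeroAnnihilator (Z : Submodule F V) : Finset (Dual F V) :=
  {φ | φ ∈ Z.dualAnnihilator ∧ φ ≠ 0}

@[simp]
lemma mem_nonzeroAnnihilator {Z : Submodule F V} {φ : Dual F V} :
    φ ∈ nonzeroAnnihilator Z ↔ φ ∈ Z.dualAnnihilator ∧ φ ≠ 0 := by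
  simp [nonzeroAnnihilator]

lemma nonzeroAnnihilator_sup (U W : Submodule F V) :
    nonzeroAnnihilator (U ⊔ W) = nonzeroAnnihilator U ∩ nonzeroAnnihilator W := by
  ext φ
  simp only [mem_inter, mem_nonzeroAnnihilator, Submodule.dualAnnihilator_sup_eq,
    Submodule.mem_inf]
  tauto

lemma nonzeroAnnihilator_anti {U W : Submodule F V} (h : U ≤ W) :
    nonzeroAnnihilator W ⊆ nonzeroAnnihilator U := fun _ hφ => by
  rw [mem_nonzeroAnnihilator] at hφ ⊢
  exact ⟨Submodule.dualAnnihilator_anti h hφ.1, hφ.2⟩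

lemma nonzeroAnnihilator_top : nonzeroAnnihilator (⊤ : Submodule F V) = ∅ := by
  ext φ
  simp [Submodule.dualAnnihilator_top]

lemma card_nonzeroAnnihilator [Fintype F] [FiniteDimensional F V] (Z : Submodule F V) :
    #(nonzeroAnnihilator Z) = Fintype.card F ^ (finrank F V - finrank F Z) - 1 := by
  have hfilter :
      nonzeroAnnihilator Z = ({φ | φ ∈ Z.dualAnnihilator} : Finset (Dual F V)).erase 0 := by
    ext φ
    simp [and_comm]
  have hrank := Subspace.finrank_add_finrank_dualAnnihilator_eq Z
  rw [hfilter, card_erase_of_mem (by simp), ← Fintype.card_subtype, card_eq_pow_finrank (K := F)]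
  congr 2
  omega

end NonzeroAnnihilator

namespace IsVSPartition

variable {F V : Type*} [Field F] [AddCommGroup V] [Module F V] {P : Finset (Submodule F V)}

lemma inf_eq_bot (hP : IsVSPartition F P) {U W : Submodule F V} (hU : U ∈ P) (hW : W ∈ P)
    (hne : U ≠ W) : U ⊓ W = ⊥ := by
  refine (Submodule.eq_bot_iff _).2 fun v hv => ?_
  by_contra hv0
  obtain ⟨hvU, hvW⟩ := Submodule.mem_inf.1 hv
  exact hne ((hP.2 v hv0).unique ⟨hU, hvU⟩ ⟨hW, hvW⟩)

lemma finrank_sup [FiniteDimensional F V] (hP : IsVSPartition F P) {U W : Submodule F V}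
    (hU : U ∈ P) (hW : W ∈ P) (hne : U ≠ W) :
    finrank F ↥(U ⊔ W) = finrank F U + finrank F W := by
  have h := Submodule.finrank_sup_add_finrank_inf_eq U W
  rwa [hP.inf_eq_bot hU hW hne, finrank_bot, add_zero] at h

variable [Fintype F] [FiniteDimensional F V] [Fintype (Dual F V)] {t : ℕ}

noncomputable def coveredFunctionals (P : Finset (Submodule F V)) (t : ℕ) :
    Finset (Dual F V) :=
  (P.filter fun U : Submodule F V => finrank F U = t).biUnion nonzeroAnnihilator

lemma card_coveredFunctionals (hP : IsVSPartition F P) (hV : finrank F V = 2 * t) :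
    #(coveredFunctionals P t) = dimCount F P t * (Fintype.card F ^ t - 1) := by
  rw [coveredFunctionals, card_biUnion, sum_const_nat, dimCount]
  · intro U hU
    rw [card_nonzeroAnnihilator, hV, (mem_filter.1 hU).2]
    congr 2
    omega
  · intro U hU U' hU' hne
    obtain ⟨hUP, hUt⟩ := mem_filter.1 hU
    obtain ⟨hU'P, hU't⟩ := mem_filter.1 hU'
    have htop : U ⊔ U' = ⊤ :=
      Submodule.eq_top_of_finrank_eq (by rw [hP.finrank_sup hUP hU'P hne, hUt, hU't, hV, two_mul])
    rw [Function.onFun, disjoint_iff_inter_eq_empty, ← nonzeroAnnihilator_sup, htop,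
      nonzeroAnnihilator_top]

lemma card_nonzeroAnnihilator_inter_coveredFunctionals_le (hP : IsVSPartition F P)
    (hV : finrank F V = 2 * t) {W : Submodule F V} (hW : W ∈ P) (hWt : finrank F W < t) :
    #(nonzeroAnnihilator W ∩ coveredFunctionals P t) ≤
      dimCount F P t * (Fintype.card F ^ (t - finrank F W) - 1) := by
  rw [coveredFunctionals, inter_biUnion, dimCount]
  refine card_biUnion_le_card_mul _ _ _ fun U hU => ?_
  obtain ⟨hUP, hUt⟩ := mem_filter.1 hU
  have hne : W ≠ U := by rintro rfl; omega
  rw [← nonzeroAnnihilator_sup, card_nonzeroAnnihilator, hP.finrank_sup hW hUP hne, hUt, hV,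
    show 2 * t - (finrank F W + t) = t - finrank F W by omega]

noncomputable def uncoveredAnnihilator (P : Finset (Submodule F V)) (t : ℕ)
    (W : Submodule F V) : Finset (Dual F V) :=
  nonzeroAnnihilator W \ coveredFunctionals P t

lemma card_uncoveredAnnihilator_bot (hP : IsVSPartition F P) (hV : finrank F V = 2 * t) :
    #(uncoveredAnnihilator P t ⊥) + dimCount F P t * (Fintype.card F ^ t - 1) =
      Fintype.card F ^ (2 * t) - 1 := by
  have hcovered : nonzeroAnnihilator ⊥ ∩ coveredFunctionals P t = coveredFunctionals P t :=
    inter_eq_right.2 (biUnion_subset.2 fun U _ => nonzeroAnnihilator_anti bot_le)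
  have h := card_sdiff_add_card_inter (nonzeroAnnihilator (⊥ : Submodule F V))
    (coveredFunctionals P t)
  rwa [hcovered, hP.card_coveredFunctionals hV, card_nonzeroAnnihilator, finrank_bot, hV,
    Nat.sub_zero] at h

lemma le_card_uncoveredAnnihilator (hP : IsVSPartition F P) (hV : finrank F V = 2 * t)
    {W : Submodule F V} (hW : W ∈ P) (hWt : finrank F W < t) :
    Fintype.card F ^ (2 * t - finrank F W) - 1 ≤
      #(uncoveredAnnihilator P t W) +
        dimCount F P t * (Fintype.card F ^ (t - finrank F W) - 1) := by
  have h := card_sdiff_add_card_inter (nonzeroAnnihilator W) (coveredFunctionals P t)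
  rw [card_nonzeroAnnihilator, hV] at h
  rw [uncoveredAnnihilator, ← h]
  exact Nat.add_le_add_left
    (hP.card_nonzeroAnnihilator_inter_coveredFunctionals_le hV hW hWt) _

lemma card_uncoveredAnnihilator_inter_le (hP : IsVSPartition F P) (hV : finrank F V = 2 * t)
    {W W' : Submodule F V} (hW : W ∈ P) (hW' : W' ∈ P) (hne : W ≠ W') :
    #(uncoveredAnnihilator P t W ∩ uncoveredAnnihilator P t W') ≤
      Fintype.card F ^ (2 * t - finrank F W - finrank F W') - 1 := by
  have hsub : uncoveredAnnihilator P t W ∩ uncoveredAnnihilator P t W' ⊆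
      nonzeroAnnihilator (W ⊔ W') := by
    rw [nonzeroAnnihilator_sup]
    exact inter_subset_inter sdiff_subset sdiff_subset
  refine (card_le_card hsub).trans_eq ?_
  rw [card_nonzeroAnnihilator, hP.finrank_sup hW hW' hne, hV, Nat.sub_sub]

lemma two_mul_sum_card_uncoveredAnnihilator_le (hP : IsVSPartition F P)
    (hV : finrank F V = 2 * t) {M : Finset (Submodule F V)} (hMP : M ⊆ P) :
    2 * ∑ W ∈ M, #(uncoveredAnnihilator P t W) ≤
      2 * #(uncoveredAnnihilator P t ⊥) +
        ∑ W ∈ M, ∑ W' ∈ M.erase W,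
          (Fintype.card F ^ (2 * t - finrank F W - finrank F W') - 1) := by
  refine (two_mul_sum_card_le_card_biUnion_add_sum_card_inter M _).trans (add_le_add ?_ ?_)
  · refine Nat.mul_le_mul_left _ (card_le_card (biUnion_subset.2 fun W _ => ?_))
    exact sdiff_subset_sdiff (nonzeroAnnihilator_anti bot_le) subset_rfl
  · refine sum_le_sum fun W hW => sum_le_sum fun W' hW' => ?_
    obtain ⟨hne, hW'M⟩ := mem_erase.1 hW'
    exact hP.card_uncoveredAnnihilator_inter_le hV (hMP hW) (hMP hW'M) hne.symm

lemma two_mul_sub_mul_sub_sum_le (hP : IsVSPartition F P) (hV : finrank F V = 2 * t)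
    {d : ℕ} {M : Finset (Submodule F V)} (hMP : M ⊆ P)
    (hM : ∀ W ∈ M, d ≤ finrank F W ∧ finrank F W < t) {a : ℚ}
    (ha : (dimCount F P t : ℚ) = (Fintype.card F : ℚ) ^ t + 1 - a) :
    2 * (#M - a) * ((Fintype.card F : ℚ) ^ t - 1 -
        ∑ W ∈ M, ((Fintype.card F : ℚ) ^ (t - finrank F W) - 1)) ≤
      #M * (#M - 1) * ((Fintype.card F : ℚ) ^ (t - d) - 1) ^ 2 := by
  set q : ℚ := (Fintype.card F : ℚ)
  set Y : Submodule F V → ℚ := fun W => q ^ (t - finrank F W) - 1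
  set T : ℚ := q ^ t - 1
  have hcast (k : ℕ) : ((Fintype.card F ^ k - 1 : ℕ) : ℚ) = q ^ k - 1 := by
    rw [Nat.cast_pred (by positivity)]
    push_cast
    rfl
  have hbot : (#(uncoveredAnnihilator P t ⊥) : ℚ) = a * T := by
    have h := congrArg (Nat.cast (R := ℚ)) (hP.card_uncoveredAnnihilator_bot hV)
    push_cast [hcast, ha] at h
    linear_combination h
  have hlower : 2 * (#M * T + (a - 1) * ∑ W ∈ M, Y W) ≤
      2 * ∑ W ∈ M, (#(uncoveredAnnihilator P t W) : ℚ) := by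
    rw [mul_sum, ← nsmul_eq_mul, ← sum_const, ← sum_add_distrib]
    gcongr with W hW
    have h := Nat.cast_le (α := ℚ) |>.2 <|
      hP.le_card_uncoveredAnnihilator hV (hMP hW) (hM W hW).2
    have hexp : 2 * t - finrank F W = t + (t - finrank F W) := by
      have := (hM W hW).2
      omega
    push_cast [hcast, ha] at h
    rw [hexp, pow_add] at h
    linarith
  have hbon := Nat.cast_le (α := ℚ) |>.2 <|
    hP.two_mul_sum_card_uncoveredAnnihilator_le hV hMP
  push_cast [hcast, hbot] at hbon
  have hpairs := sum_sum_erase_pow_sub_le (Nat.one_le_cast.2 Fintype.card_pos : 1 ≤ q) hM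
  linarith

end IsVSPartition

lemma sub_div_le_of_two_mul_sub_mul_sub_le {K : Type*} [Field K] [LinearOrder K]
    [IsStrictOrderedRing K] {m a T B X : K} (hm : 0 ≤ m * (m - 1)) (hB : B ≤ m * X)
    (hT : m * X < T) (h : 2 * (m - a) * (T - B) ≤ m * (m - 1) * X ^ 2) :
    m - m * (m - 1) * (X ^ 2 / 2) / (T - m * X) ≤ a := by
  have hD : 0 < T - m * X := sub_pos.2 hT
  rcases le_or_gt m a with hma | hma
  · have : 0 ≤ m * (m - 1) * (X ^ 2 / 2) / (T - m * X) :=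
      div_nonneg (mul_nonneg hm (by positivity)) hD.le
    linarith
  · rw [sub_le_comm, le_div_iff₀ hD]
    nlinarith [mul_le_mul_of_nonneg_left (show T - m * X ≤ T - B by linarith)
      (sub_nonneg.2 hma.le)]

lemma Rq_eq {q t d m : ℕ} (hd : d ≤ t) :
    Rq q t d m = m * (m - 1) * (((q : ℚ) ^ (t - d) - 1) ^ 2 / 2) /
      ((q : ℚ) ^ t - 1 - m * ((q : ℚ) ^ (t - d) - 1)) := by
  rw [Rq, show 2 * t - 2 * d = (t - d) * 2 by omega, pow_mul]
  ring

theorem stmt13_general (q t d : ℕ) (F V : Type*) [Field F] [Fintype F] [AddCommGroup V]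
    [Module F V] [FiniteDimensional F V] (hq : Fintype.card F = q)
    (hV : Module.finrank F V = 2 * t)
    (P : Finset (Submodule F V)) (hP : IsVSPartition F P)
    (a : ℤ) (ha : (dimCount F P t : ℤ) = (q : ℤ) ^ t + 1 - a)
    (hd2 : d < t)
    (m : ℕ)
    (hm : m = (P.filter fun (U : Submodule F V) =>
        d ≤ Module.finrank F ↥U ∧ Module.finrank F ↥U < t).card)
    (hlt : (m : ℚ) < ((q : ℚ) ^ t - 1) / ((q : ℚ) ^ (t - d) - 1)) :
    (m : ℚ) - Rq q t d m ≤ (a : ℚ) := by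
  subst hq
  have : Finite (Dual F V) := Module.finite_of_finite F
  have : Fintype (Dual F V) := Fintype.ofFinite _
  set M := P.filter fun (U : Submodule F V) => d ≤ finrank F U ∧ finrank F U < t
  have hM : ∀ W ∈ M, d ≤ finrank F W ∧ finrank F W < t := fun W hW => (mem_filter.1 hW).2
  have hq1 : 1 < (Fintype.card F : ℚ) := Nat.one_lt_cast.2 Fintype.one_lt_card
  have hX : 0 < (Fintype.card F : ℚ) ^ (t - d) - 1 := sub_pos.2 (one_lt_pow₀ hq1 (by omega))
  have hm0 : 0 ≤ (m : ℚ) * (m - 1) := by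
    rcases Nat.eq_zero_or_pos m with h | h
    · simp [h]
    · exact mul_nonneg m.cast_nonneg (sub_nonneg.2 (Nat.one_le_cast.2 h))
  have hB : ∑ W ∈ M, ((Fintype.card F : ℚ) ^ (t - finrank F W) - 1) ≤
      m * ((Fintype.card F : ℚ) ^ (t - d) - 1) := by
    rw [hm, ← nsmul_eq_mul]
    refine sum_le_card_nsmul _ _ _ fun W hW => ?_
    gcongr
    · exact hq1.le
    · exact (hM W hW).1
  have hkey := hP.two_mul_sub_mul_sub_sum_le hV (filter_subset _ _) hM (a := a)
    (by exact_mod_cast ha)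
  rw [← hm] at hkey
  rw [Rq_eq hd2.le]
  exact sub_div_le_of_two_mul_sub_mul_sub_le hm0 hB ((lt_div_iff₀ hX).1 hlt) hkey

/-- Corollary: with `m` the number of members of dimension at least `d` and less
than `t`, if `m < (q^t - 1)/(q^{t-d} - 1)` then `a ≥ m - R_q(t, d, m)`. -/
theorem stmt13 (q t d : ℕ) (F V : Type*) [Field F] [Fintype F] [AddCommGroup V]
    [Module F V] [FiniteDimensional F V] (hq : Fintype.card F = q)
    (hV : Module.finrank F V = 2 * t)
    (P : Finset (Submodule F V)) (hP : IsVSPartition F P)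
    (a : ℤ) (ha : (dimCount F P t : ℤ) = (q : ℤ) ^ t + 1 - a)
    (hd1 : t < 2 * d) (hd2 : d < t)
    (m : ℕ)
    (hm : m = (P.filter fun (U : Submodule F V) =>
        d ≤ Module.finrank F ↥U ∧ Module.finrank F ↥U < t).card)
    (hlt : (m : ℚ) < ((q : ℚ) ^ t - 1) / ((q : ℚ) ^ (t - d) - 1)) :
    (m : ℚ) - Rq q t d m ≤ (a : ℚ) :=
  stmt13_general q t d F V hq hV P hP a ha hd2 m hm hlt
end
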